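/- arXiv:1401.4197 — 3 statements merged into one kernel-verified Lean document; each statement's English description precedes it below -/
import Mathlib

section
/- Let T be a simple graph on a vertex set V that is connected and acyclic (a tree), let o ∈ V, and let r ∈ ℕ. If M₁ and M₂ are perfect matchings of T that agree on every edge of T having at least one endpoint at graph distance greater than r+1 from o, then M₁ and M₂ agree on every edge of T having at least one endpoint at graph distance greater than r from o. -/
/-! In a tree rooted at `o`, a vertex `x` at distance `r + 1` has exactly one neighbour closer
to `o`; every other edge at `x` reaches distance `r + 2`, where the two matchings agree. So if
`M₁` matches `x` to its parent, the `M₂`-edge at `x` is either that same edge or an edge of `M₁`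
at `x`, which again can only be the parent edge. -/

def IsPerfectMatchingEdgeSet {V : Type*} (T : SimpleGraph V) (M : Set (Sym2 V)) : Prop :=
  M ⊆ T.edgeSet ∧ ∀ v : V, ∃! e : Sym2 V, e ∈ M ∧ v ∈ e

namespace SimpleGraph

variable {V : Type*} {G : SimpleGraph V} {o x u w : V}

lemma IsAcyclic.eq_snd_of_adj_of_dist_lt (hG : G.IsAcyclic) {P : G.Walk x o} (hP : P.IsPath)
    (hadj : G.Adj x u) (hu : G.dist o u < G.dist o x) : u = P.snd := by
  classical
  obtain ⟨q, hq, hql⟩ := Reachable.exists_path_of_dist ⟨P.reverse.concat hadj⟩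
  have hx : x ∉ q.support := fun hmem => by
    have := dist_le (q.takeUntil x hmem)
    have := q.length_takeUntil_le_length hmem
    omega
  have huP : u ∈ P.support := by
    simpa using hG.mem_support_of_ne_mem_support_of_adj_of_isPath hP.reverse hq hadj hx
  exact hG.eq_snd_of_adj_start hP hadj huP

lemma IsTree.dist_eq_add_one_of_adj_of_ne (hG : G.IsTree) (hu : G.Adj x u)
    (hdu : G.dist o u < G.dist o x) (hw : G.Adj x w) (hwu : w ≠ u) :
    G.dist o w = G.dist o x + 1 := by
  obtain ⟨P, hP, -⟩ := hG.connected.exists_path_of_dist x o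
  refine (hG.dist_eq_dist_add_one_of_adj o hw).resolve_left fun hdw => hwu ?_
  rw [hG.isAcyclic.eq_snd_of_adj_of_dist_lt hP hw (by omega),
    hG.isAcyclic.eq_snd_of_adj_of_dist_lt hP hu hdu]

end SimpleGraph

lemma IsPerfectMatchingEdgeSet.mem_of_incident_mem {V : Type*} {T : SimpleGraph V}
    {M M' : Set (Sym2 V)} (hM : IsPerfectMatchingEdgeSet T M)
    (hM' : IsPerfectMatchingEdgeSet T M') {x : V} {e : Sym2 V} (hxe : x ∈ e) (he : e ∈ M)
    (h : ∀ e' ∈ M', x ∈ e' → e' ∈ M) : e ∈ M' := by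
  obtain ⟨e', ⟨he', hxe'⟩, -⟩ := hM'.2 x
  rwa [← (hM.2 x).unique ⟨h e' he' hxe', hxe'⟩ ⟨he, hxe⟩]

/-- If two perfect matchings of a tree agree on every edge having at least one endpoint
at distance greater than `r+1` from `o`, then they agree on every edge having at least
one endpoint at distance greater than `r` from `o`. -/
theorem perfectMatching_agree_step {V : Type*} (T : SimpleGraph V)
    (hconn : T.Connected) (hacyc : T.IsAcyclic) (o : V) (r : ℕ)
    (M₁ M₂ : Set (Sym2 V))
    (hM₁ : IsPerfectMatchingEdgeSet T M₁) (hM₂ : IsPerfectMatchingEdgeSet T M₂)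
    (hagree : ∀ e ∈ T.edgeSet, (∃ x ∈ e, r + 1 < T.dist o x) → (e ∈ M₁ ↔ e ∈ M₂)) :
    ∀ e ∈ T.edgeSet, (∃ x ∈ e, r < T.dist o x) → (e ∈ M₁ ↔ e ∈ M₂) := by
  have hT : T.IsTree := ⟨hconn, hacyc⟩
  rintro e he ⟨x, hxe, hx⟩
  by_cases hfar : ∃ y ∈ e, r + 1 < T.dist o y
  · exact hagree e he hfar
  push Not at hfar
  obtain ⟨u, rfl⟩ := Sym2.mem_iff_exists.mp hxe
  have hxu : T.Adj x u := he
  have hux : T.dist o u < T.dist o x := by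
    have := hT.dist_ne_of_adj o hxu
    have := hfar x hxe
    have := hfar u (Sym2.mem_mk_right x u)
    omega
  have transfer : ∀ M M' : Set (Sym2 V), IsPerfectMatchingEdgeSet T M →
      IsPerfectMatchingEdgeSet T M' →
      (∀ e ∈ T.edgeSet, (∃ y ∈ e, r + 1 < T.dist o y) → (e ∈ M' → e ∈ M)) →
      s(x, u) ∈ M → s(x, u) ∈ M' := by
    intro M M' hM hM' hag heM
    refine hM.mem_of_incident_mem hM' hxe heM fun e' he' hxe' => ?_
    obtain ⟨w, rfl⟩ := Sym2.mem_iff_exists.mp hxe'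
    by_cases hwu : w = u
    · exact hwu ▸ heM
    have hxw : T.Adj x w := hM'.1 he'
    have hw := hT.dist_eq_add_one_of_adj_of_ne hxu hux hxw hwu
    exact hag _ hxw ⟨w, Sym2.mem_mk_right x w, by omega⟩ he'
  exact ⟨transfer M₁ M₂ hM₁ hM₂ fun e he hy => (hagree e he hy).mpr,
    transfer M₂ M₁ hM₂ hM₁ fun e he hy => (hagree e he hy).mp⟩
end

section
/- Let T be a simple graph on a vertex set V that is connected and acyclic (a tree), let o ∈ V, and let r ∈ ℕ. If M₁ and M₂ are perfect matchings of T that agree on every edge of T having at least one endpoint at graph distance greater than r from o, then M₁ = M₂. -/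
namespace SimpleGraph

variable {V : Type*} {G : SimpleGraph V}

theorem IsAcyclic.eq_of_adj_of_dist_le (hG : G.IsAcyclic) {o x u w : V} (hox : G.Reachable o x)
    (hu : G.Adj x u) (hw : G.Adj x w)
    (hdu : G.dist o u ≤ G.dist o x) (hdw : G.dist o w ≤ G.dist o x) : u = w := by
  obtain ⟨P, hP, -⟩ := hox.symm.exists_path_of_dist
  have eq_snd : ∀ y, G.Adj x y → G.dist o y ≤ G.dist o x → y = P.snd := by
    intro y hy hdy
    have hoy : G.Reachable o y := hox.trans hy.reachable
    have hdist : G.dist o x = G.dist o y + 1 := by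
      have := hG.dist_eq_dist_add_one_of_adj_of_reachable o hy.symm hoy
      omega
    obtain ⟨p, -, hp⟩ := hoy.symm.exists_path_of_dist
    have hpath : (Walk.cons hy p).IsPath :=
      Walk.isPath_of_length_eq_dist _ (by rw [Walk.length_cons, hp, dist_comm, dist_comm (u := x),
        hdist])
    have hP_eq : Walk.cons hy p = P :=
      congrArg Subtype.val ((hG.subsingleton_path x o).elim ⟨_, hpath⟩ ⟨P, hP⟩)
    rw [← hP_eq, Walk.snd_cons]
  rw [eq_snd u hu hdu, eq_snd w hw hdw]

end SimpleGraph

open SimpleGraph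

section

variable {V : Type*} {T : SimpleGraph V} {M₁ M₂ : Set (Sym2 V)}

theorem IsPerfectMatchingEdgeSet.mem_iff_of_forall_ne (hM₁ : IsPerfectMatchingEdgeSet T M₁)
    (hM₂ : IsPerfectMatchingEdgeSet T M₂) {v : V} {e : Sym2 V} (hv : v ∈ e)
    (h : ∀ f ∈ T.edgeSet, v ∈ f → f ≠ e → (f ∈ M₁ ↔ f ∈ M₂)) : e ∈ M₁ ↔ e ∈ M₂ := by
  have mem_of_mem : ∀ {A B : Set (Sym2 V)}, IsPerfectMatchingEdgeSet T A →
      IsPerfectMatchingEdgeSet T B → (∀ f ∈ T.edgeSet, v ∈ f → f ≠ e → f ∈ B → f ∈ A) →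
      e ∈ A → e ∈ B := by
    intro A B hA hB hBA heA
    obtain ⟨f, ⟨hfB, hvf⟩, -⟩ := hB.2 v
    by_contra heB
    have hfe : f ≠ e := by rintro rfl; exact heB hfB
    exact hfe ((hA.2 v).unique ⟨hBA f (hB.1 hfB) hvf hfe hfB, hvf⟩ ⟨heA, hv⟩)
  exact ⟨mem_of_mem hM₁ hM₂ fun f hf hvf hfe => (h f hf hvf hfe).mpr,
    mem_of_mem hM₂ hM₁ fun f hf hvf hfe => (h f hf hvf hfe).mp⟩

def AgreeOutsideBall (T : SimpleGraph V) (o : V) (r : ℕ) (M₁ M₂ : Set (Sym2 V)) : Prop :=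
  ∀ e ∈ T.edgeSet, (∃ x ∈ e, r < T.dist o x) → (e ∈ M₁ ↔ e ∈ M₂)

theorem AgreeOutsideBall.of_succ (hT : T.IsAcyclic) {o : V} {r : ℕ}
    (hM₁ : IsPerfectMatchingEdgeSet T M₁) (hM₂ : IsPerfectMatchingEdgeSet T M₂)
    (h : AgreeOutsideBall T o (r + 1) M₁ M₂) : AgreeOutsideBall T o r M₁ M₂ := by
  rintro e he ⟨x, hxe, hx⟩
  by_cases hfar : ∃ y ∈ e, r + 1 < T.dist o y
  · exact h e he hfar
  push Not at hfar
  obtain ⟨u, rfl⟩ := Sym2.mem_iff_exists.mp hxe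
  have hdx : T.dist o x = r + 1 := le_antisymm (hfar x hxe) hx
  have hox : T.Reachable o x := Reachable.of_dist_ne_zero (by omega)
  refine hM₁.mem_iff_of_forall_ne hM₂ hxe fun f hf hxf hfu => ?_
  obtain ⟨w, rfl⟩ := Sym2.mem_iff_exists.mp hxf
  refine h _ hf ⟨w, Sym2.mem_mk_right x w, ?_⟩
  by_contra! hdw
  have hwu : w = u := hT.eq_of_adj_of_dist_le hox hf he (hdx ▸ hdw)
    (hdx ▸ hfar u (Sym2.mem_mk_right x u))
  exact hfu (hwu ▸ rfl)

theorem eq_of_agreeOutsideBall_zero (hT : T.Connected) {o : V} (hM₁ : M₁ ⊆ T.edgeSet)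
    (hM₂ : M₂ ⊆ T.edgeSet) (h : AgreeOutsideBall T o 0 M₁ M₂) : M₁ = M₂ := by
  have far : ∀ e ∈ T.edgeSet, ∃ x ∈ e, 0 < T.dist o x := by
    rintro ⟨a, b⟩ hab
    by_cases ha : a = o
    · exact ⟨b, Sym2.mem_mk_right a b, hT.pos_dist_of_ne (ha ▸ hab.ne)⟩
    · exact ⟨a, Sym2.mem_mk_left a b, hT.pos_dist_of_ne (Ne.symm ha)⟩
  ext e
  exact ⟨fun he => (h e (hM₁ he) (far e (hM₁ he))).mp he,
    fun he => (h e (hM₂ he) (far e (hM₂ he))).mpr he⟩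

end

/-- If two perfect matchings of a tree agree on every edge having at least one endpoint
at distance greater than `r` from `o`, then they are equal. -/
theorem perfectMatching_eq_of_agree_outside_ball {V : Type*} (T : SimpleGraph V)
    (hconn : T.Connected) (hacyc : T.IsAcyclic) (o : V) (r : ℕ)
    (M₁ M₂ : Set (Sym2 V))
    (hM₁ : IsPerfectMatchingEdgeSet T M₁) (hM₂ : IsPerfectMatchingEdgeSet T M₂)
    (hagree : ∀ e ∈ T.edgeSet, (∃ x ∈ e, r < T.dist o x) → (e ∈ M₁ ↔ e ∈ M₂)) :
    M₁ = M₂ := by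
  induction r with
  | zero => exact eq_of_agreeOutsideBall_zero hconn hM₁.1 hM₂.1 hagree
  | succ r ih => exact ih (AgreeOutsideBall.of_succ hacyc hM₁ hM₂ hagree)
end

section
/- Let d ≥ 3 be a natural number, let T be a simple graph on a vertex set V that is connected, acyclic, and d-regular (the d-regular tree), let o ∈ V, let n ≥ 1, and let x ∈ V with dist(o,x) = n. Then for every real θ, the (finite) sum over all y with dist(o,y) = n of θ^{dist(x,y)} equals 1 + Σ_{k=1}^{n−1} (d−2)·(d−1)^{k−1}·θ^{2k} + (d−1)^n·θ^{2n}. -/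
/-!
For adjacent `u`, `w` in a tree, `branchSphere u w (k + 1)` is the disjoint union of the
`branchSphere w w' k` over the neighbours `w' ≠ u` of `w`, so in a `d`-regular tree it has
`(d - 1) ^ k` elements; likewise the sphere of radius `k + 1` about `o` is the disjoint union of
the `branchSphere o w k` over the `d` neighbours `w` of `o`. If `x` lies in the branch through
`w₀`, every `y` in the branch through another neighbour of `w` is reached from `x` through `w`,
so `dist x y = 2 (k + 1)`. Induction on the depth of the branch containing `x` gives the sum.
-/

open Set

theorem Set.Finite.finsum_mem_const {α M : Type*} [AddCommMonoid M] {s : Set α} (hs : s.Finite)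
    (c : M) : ∑ᶠ _ ∈ s, c = s.ncard • c := by
  rw [finsum_mem_eq_finite_toFinset_sum _ hs, Finset.sum_const, ncard_eq_toFinset_card _ hs]

namespace SimpleGraph

variable {V : Type*} {G : SimpleGraph V} {u w y : V} {k : ℕ}

/-- For `G.Adj u w` in a tree: the vertices at depth `k` of the subtree that the edge `uw` cuts
off at `w`. -/
def branchSphere (G : SimpleGraph V) (u w : V) (k : ℕ) : Set V :=
  {y | G.dist u y = k + 1 ∧ G.dist w y = k}

lemma Connected.exists_adj_dist_eq_of_dist_eq_add_one (hG : G.Connected)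
    (h : G.dist u y = k + 1) : ∃ w, G.Adj u w ∧ G.dist w y = k := by
  obtain ⟨p, -, hp⟩ := hG.exists_path_of_dist u y
  have hnil : ¬p.Nil := by
    rw [← Walk.length_eq_zero_iff]; omega
  refine ⟨p.snd, p.adj_snd hnil, le_antisymm ?_ ?_⟩
  · have := dist_le p.tail
    have := p.length_tail_add_one hnil
    omega
  · have := hG.dist_triangle (u := u) (v := p.snd) (w := y)
    rw [dist_eq_one_iff_adj.mpr (p.adj_snd hnil)] at this
    omega

lemma Connected.setOf_dist_eq_add_one (hG : G.Connected) (w : V) (k : ℕ) :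
    {y | G.dist w y = k + 1} = ⋃ w' ∈ G.neighborSet w, G.branchSphere w w' k := by
  ext y
  simp only [mem_ofPred_eq, mem_iUnion, mem_neighborSet, branchSphere, exists_prop]
  constructor
  · intro h
    obtain ⟨w', hw', hd⟩ := hG.exists_adj_dist_eq_of_dist_eq_add_one h
    exact ⟨w', hw', h, hd⟩
  · rintro ⟨w', -, h, -⟩
    exact h

lemma Connected.finite_setOf_dist_eq (hG : G.Connected) (hfin : ∀ v, (G.neighborSet v).Finite)
    (w : V) (k : ℕ) : {y | G.dist w y = k}.Finite := by
  induction k generalizing w with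
  | zero => simp [hG.dist_eq_zero_iff]
  | succ k ih =>
    rw [hG.setOf_dist_eq_add_one]
    exact (hfin w).biUnion fun w' _ ↦ (ih w').subset fun _ hy ↦ hy.2

lemma Connected.finite_branchSphere (hG : G.Connected) (hfin : ∀ v, (G.neighborSet v).Finite)
    (u w : V) (k : ℕ) : (G.branchSphere u w k).Finite :=
  (hG.finite_setOf_dist_eq hfin w k).subset fun _ hy ↦ hy.2

lemma IsAcyclic.eq_snd_of_dist_add_one_eq (hG : G.IsAcyclic) {p : G.Walk u y} (hp : p.IsPath)
    (hadj : G.Adj u w) (hd : G.dist w y + 1 = G.dist u y) : w = p.snd := by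
  classical
  obtain ⟨q, hq, hql⟩ := (hadj.symm.reachable.trans p.reachable).exists_path_of_dist
  have hu : u ∉ q.support := fun hu ↦ by
    have := q.length_dropUntil_lt_length hu hadj.ne
    have := dist_le (q.dropUntil u hu)
    omega
  have : p = Walk.cons hadj q := congrArg Subtype.val <|
    (hG.subsingleton_path u y).elim ⟨p, hp⟩ ⟨_, hq.cons hu⟩
  rw [this, Walk.snd_cons]

lemma IsAcyclic.eq_of_adj_of_dist_add_one_eq (hG : G.IsAcyclic) {w₁ w₂ : V}
    (h₁ : G.Adj u w₁) (h₂ : G.Adj u w₂) (hd₁ : G.dist w₁ y + 1 = G.dist u y)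
    (hd₂ : G.dist w₂ y + 1 = G.dist u y) : w₁ = w₂ := by
  obtain ⟨p, hp, -⟩ :=
    (Reachable.of_dist_ne_zero (by omega : G.dist u y ≠ 0)).exists_path_of_dist
  rw [hG.eq_snd_of_dist_add_one_eq hp h₁ hd₁, hG.eq_snd_of_dist_add_one_eq hp h₂ hd₂]

lemma IsAcyclic.pairwiseDisjoint_branchSphere (hG : G.IsAcyclic) (w : V) (k : ℕ) :
    (G.neighborSet w).PairwiseDisjoint (G.branchSphere w · k) := by
  intro w₁ h₁ w₂ h₂ hne
  refine Set.disjoint_left.mpr fun y hy₁ hy₂ ↦ hne ?_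
  exact hG.eq_of_adj_of_dist_add_one_eq h₁ h₂ (by rw [hy₁.1, hy₁.2]) (by rw [hy₂.1, hy₂.2])

lemma IsAcyclic.dist_eq_dist_add_one_of_adj_of_ne (hG : G.IsAcyclic) {w' : V}
    (hw' : G.Adj w w') (hu : G.Adj w u) (hdu : G.dist u y + 1 = G.dist w y) (hne : w' ≠ u) :
    G.dist w' y = G.dist w y + 1 := by
  rw [dist_comm, dist_comm (u := w)]
  have hreach : G.Reachable y w := (Reachable.of_dist_ne_zero (by omega)).symm
  rcases hG.dist_eq_dist_add_one_of_adj_of_reachable y hw' hreach with h | h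
  · exact (hne (hG.eq_of_adj_of_dist_add_one_eq hw' hu
      (by rw [dist_comm, ← h, dist_comm]) hdu)).elim
  · exact h

lemma Connected.branchSphere_zero (hG : G.Connected) (huw : G.Adj u w) :
    G.branchSphere u w 0 = {w} := by
  ext y
  simp only [branchSphere, mem_ofPred_eq, mem_singleton_iff, hG.dist_eq_zero_iff]
  constructor
  · exact fun h ↦ h.2.symm
  · rintro rfl
    exact ⟨dist_eq_one_iff_adj.mpr huw, rfl⟩

lemma IsTree.branchSphere_add_one (hG : G.IsTree) (huw : G.Adj u w) (k : ℕ) :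
    G.branchSphere u w (k + 1) = ⋃ w' ∈ G.neighborSet w \ {u}, G.branchSphere w w' k := by
  ext y
  simp only [branchSphere, mem_ofPred_eq, mem_iUnion, mem_sdiff, mem_neighborSet,
    mem_singleton_iff, exists_prop]
  constructor
  · rintro ⟨hu, hw⟩
    obtain ⟨w', hw', hd⟩ := hG.connected.exists_adj_dist_eq_of_dist_eq_add_one hw
    refine ⟨w', ⟨hw', ?_⟩, hw, hd⟩
    rintro rfl
    omega
  · rintro ⟨w', ⟨hw', hne⟩, hw, hd⟩
    refine ⟨?_, hw⟩
    rw [hG.isAcyclic.dist_eq_dist_add_one_of_adj_of_ne huw.symm hw' (by omega) (Ne.symm hne), hw]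

lemma IsTree.dist_eq_of_mem_branchSphere (hG : G.IsTree) {v : V} (huw : G.Adj u w)
    (hv : G.dist w v = G.dist u v + 1) (hy : y ∈ G.branchSphere u w k) :
    G.dist y v = G.dist u v + (k + 1) := by
  induction k generalizing u w with
  | zero =>
    rw [hG.connected.branchSphere_zero huw] at hy
    rw [hy, hv]
  | succ k ih =>
    rw [hG.branchSphere_add_one huw] at hy
    simp only [mem_iUnion, mem_sdiff, mem_neighborSet, mem_singleton_iff, exists_prop] at hy
    obtain ⟨w', ⟨hw', hne⟩, hy⟩ := hy
    rw [ih hw' (hG.isAcyclic.dist_eq_dist_add_one_of_adj_of_ne hw' huw.symm hv.symm hne) hy, hv]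
    ring

lemma IsTree.ncard_branchSphere (hG : G.IsTree) {d : ℕ}
    (hfin : ∀ v, (G.neighborSet v).Finite) (hreg : ∀ v, (G.neighborSet v).ncard = d)
    (huw : G.Adj u w) (k : ℕ) :
    (G.branchSphere u w k).ncard = (d - 1) ^ k := by
  induction k generalizing u w with
  | zero => simp [hG.connected.branchSphere_zero huw]
  | succ k ih =>
    have hA : G.neighborSet w \ {u} ⊆ G.neighborSet w := sdiff_subset
    rw [hG.branchSphere_add_one huw, ((hfin w).subset hA).ncard_biUnion
        (fun _ _ ↦ hG.connected.finite_branchSphere hfin _ _ _)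
        ((hG.isAcyclic.pairwiseDisjoint_branchSphere w k).subset hA),
      finsum_mem_congr rfl fun w' hw' ↦ ih hw'.1, ((hfin w).subset hA).finsum_mem_const,
      ncard_sdiff_singleton_of_mem (show u ∈ G.neighborSet w from huw.symm), hreg, smul_eq_mul,
      pow_succ']

lemma IsTree.finsum_biUnion_branchSphere_pow_dist (hG : G.IsTree) {d : ℕ}
    (hfin : ∀ v, (G.neighborSet v).Finite) (hreg : ∀ v, (G.neighborSet v).ncard = d)
    {A : Set V} {w₀ x : V} (hA : A ⊆ G.neighborSet w) (hw₀ : w₀ ∈ A)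
    (hx : x ∈ G.branchSphere w w₀ k) (θ : ℝ) :
    ∑ᶠ y ∈ ⋃ w' ∈ A, G.branchSphere w w' k, θ ^ G.dist x y
      = ∑ᶠ y ∈ G.branchSphere w w₀ k, θ ^ G.dist x y
        + ((A.ncard : ℝ) - 1) * ((d - 1 : ℕ) : ℝ) ^ k * θ ^ (2 * (k + 1)) := by
  have hAfin : A.Finite := (hfin w).subset hA
  have hfar : ∀ w' ∈ A \ {w₀}, ∑ᶠ y ∈ G.branchSphere w w' k, θ ^ G.dist x y
      = ((d - 1 : ℕ) : ℝ) ^ k * θ ^ (2 * (k + 1)) := by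
    rintro w' ⟨hw', hne⟩
    have hdist : ∀ y ∈ G.branchSphere w w' k, G.dist x y = 2 * (k + 1) := fun y hy ↦ by
      have hxw' := hG.isAcyclic.dist_eq_dist_add_one_of_adj_of_ne (hA hw') (hA hw₀)
        (by rw [hx.1, hx.2]) hne
      rw [dist_comm, hG.dist_eq_of_mem_branchSphere (hA hw') hxw' hy, hx.1]
      ring
    rw [finsum_mem_congr rfl fun y hy ↦ by rw [hdist y hy],
      (hG.connected.finite_branchSphere hfin w w' k).finsum_mem_const,
      hG.ncard_branchSphere hfin hreg (hA hw') k, nsmul_eq_mul]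
    push_cast
    ring
  rw [finsum_mem_biUnion ((hG.isAcyclic.pairwiseDisjoint_branchSphere w k).subset hA) hAfin
      fun _ _ ↦ hG.connected.finite_branchSphere hfin _ _ _,
    ← finsum_mem_add_sdiff (singleton_subset_iff.mpr hw₀) hAfin, finsum_mem_singleton,
    finsum_mem_congr rfl hfar, (hAfin.subset sdiff_subset).finsum_mem_const,
    ncard_sdiff_singleton_of_mem hw₀, nsmul_eq_mul,
    Nat.cast_sub ((ncard_pos hAfin).mpr ⟨w₀, hw₀⟩)]
  ring

lemma IsTree.finsum_branchSphere_pow_dist (hG : G.IsTree) {d : ℕ}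
    (hfin : ∀ v, (G.neighborSet v).Finite) (hreg : ∀ v, (G.neighborSet v).ncard = d)
    (hd : 2 ≤ d) (huw : G.Adj u w) {x : V} (hx : x ∈ G.branchSphere u w k) (θ : ℝ) :
    ∑ᶠ y ∈ G.branchSphere u w k, θ ^ G.dist x y
      = 1 + ∑ j ∈ Finset.Icc 1 k, ((d : ℝ) - 2) * ((d : ℝ) - 1) ^ (j - 1) * θ ^ (2 * j) := by
  induction k generalizing u w with
  | zero =>
    rw [hG.connected.branchSphere_zero huw] at hx ⊢
    rw [finsum_mem_singleton, mem_singleton_iff.mp hx, dist_self]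
    simp
  | succ k ih =>
    rw [hG.branchSphere_add_one huw] at hx ⊢
    obtain ⟨w₀, hw₀, hx₀⟩ := mem_iUnion₂.mp hx
    rw [hG.finsum_biUnion_branchSphere_pow_dist hfin hreg sdiff_subset hw₀ hx₀, ih hw₀.1 hx₀,
      Finset.sum_Icc_succ_top (by omega),
      ncard_sdiff_singleton_of_mem (show u ∈ G.neighborSet w from huw.symm), hreg]
    push_cast [Nat.cast_sub (by omega : 1 ≤ d)]
    ring

end SimpleGraph

/-- In the `d`-regular tree (`d ≥ 3`), for `x` on the sphere of radius `n ≥ 1` about `o`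
and any real `θ`, the sum over the sphere `{y : dist o y = n}` of `θ^{dist x y}` equals
`1 + ∑_{k=1}^{n-1} (d-2)(d-1)^{k-1} θ^{2k} + (d-1)^n θ^{2n}`. -/
theorem sphere_sum_theta_pow_dist {V : Type*} (d : ℕ) (hd : 3 ≤ d)
    (T : SimpleGraph V) (hconn : T.Connected) (hacyc : T.IsAcyclic)
    (hreg : ∀ v : V, (T.neighborSet v).ncard = d)
    (o : V) (n : ℕ) (hn : 1 ≤ n) (x : V) (hx : T.dist o x = n) (θ : ℝ) :
    ∑ᶠ y ∈ {y : V | T.dist o y = n}, θ ^ (T.dist x y)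
      = 1 + (∑ k ∈ Finset.Icc 1 (n - 1),
            ((d : ℝ) - 2) * ((d : ℝ) - 1) ^ (k - 1) * θ ^ (2 * k))
        + ((d : ℝ) - 1) ^ n * θ ^ (2 * n) := by
  obtain ⟨k, rfl⟩ : ∃ k, n = k + 1 := ⟨n - 1, by omega⟩
  have hT : T.IsTree := ⟨hconn, hacyc⟩
  have hfin (v : V) : (T.neighborSet v).Finite := finite_of_ncard_ne_zero (by rw [hreg]; omega)
  have hxo : x ∈ {y | T.dist o y = k + 1} := hx
  rw [hconn.setOf_dist_eq_add_one] at hxo ⊢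
  obtain ⟨w₀, hw₀, hx₀⟩ := mem_iUnion₂.mp hxo
  rw [hT.finsum_biUnion_branchSphere_pow_dist hfin hreg subset_rfl hw₀ hx₀,
    hT.finsum_branchSphere_pow_dist hfin hreg (by omega) hw₀ hx₀, hreg, Nat.add_sub_cancel]
  push_cast [Nat.cast_sub (by omega : 1 ≤ d)]
  ring
end
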